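/- For every B > 0 there exist a finite constant C > 0 and ε₀ > 0 such that for all 0 < ε < ε₀ and all β ∈ ℝ with |β| ≤ B ε^{−2}: 0 ≤ E^gv_β ≤ C and E^gv_β ≤ μ_β ≤ 2 E^gv_β, hence μ_β ≤ 2C. -/

import Mathlib

open MeasureTheory Real Set

noncomputable section

/-- `α := Ω₀ √(s+2)`. -/
def alphaP (s Ω₀ : ℝ) : ℝ := Ω₀ * Real.sqrt (s + 2)

/-- The half-width `η := (η₀/(2√Ω₀)) |log ε|` of the annulus (in rescaled coordinates). -/
def etaP (Ω₀ η₀ ε : ℝ) : ℝ := η₀ / (2 * Real.sqrt Ω₀) * |Real.log ε|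

/-- The trapping potential `W(x) = (1/s)(x^s − 1) − (1/2)(x² − 1)`. -/
def Wpot (s x : ℝ) : ℝ := 1 / s * (x ^ s - 1) - 1 / 2 * (x ^ 2 - 1)

/-- The fourth-order Taylor remainder `φ` of `W` at `x = 1`, defined by
`W(1+ε²y) = ((s−2)/2)ε⁴y² + ((s−2)(s−1)/6)ε⁶y³ + ε⁸φ(y)`. -/
def phiP (s ε : ℝ) (y : ℝ) : ℝ :=
  (Wpot s (1 + ε ^ 2 * y)
      - ((s - 2) / 2 * ε ^ 4 * y ^ 2 + (s - 2) * (s - 1) / 6 * ε ^ 6 * y ^ 3)) / ε ^ 8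

/-- The potential `U_β`. -/
def Ubeta (s Ω₀ ε β : ℝ) (y : ℝ) : ℝ :=
  ((alphaP s Ω₀) ^ 2 / 2 * y ^ 2 - 2 * Ω₀ * ε ^ 2 * β * y - Ω₀ * ε ^ 4 * β * y ^ 2
      + 1 / 2 * ε ^ 4 * β ^ 2) / (1 + ε ^ 2 * y) ^ 2

/-- The lower-order potential `v`. -/
def vP (s Ω₀ ε : ℝ) (y : ℝ) : ℝ :=
  Ω₀ ^ 2 * (s + (s - 1) * ε ^ 2 * y) / (1 + ε ^ 2 * y) ^ 2
    + (s - 1) * (s - 2) * Ω₀ ^ 2 / 6 + ε ^ 2 * Ω₀ ^ 2 * phiP s ε y / y ^ 3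

/-- The giant-vortex functional `E^gv_β[g]` on `(−η, η)`. -/
def betaFunctional (s Ω₀ η₀ ε β : ℝ) (g : ℝ → ℝ) : ℝ :=
  ∫ y in Set.Ioo (-(etaP Ω₀ η₀ ε)) (etaP Ω₀ η₀ ε),
    (1 + ε ^ 2 * y) *
      (1 / 2 * (deriv g y) ^ 2 + Ubeta s Ω₀ ε β y * (g y) ^ 2
        + ε ^ 2 * y ^ 3 * vP s Ω₀ ε y * (g y) ^ 2 + 1 / (2 * π) * (g y) ^ 4)

/-- Membership in the minimization domain `D^gv_β`: real-valued `g ∈ H¹((−η,η))` with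
weighted normalization `∫ (1+ε²y) g² = 1`. -/
def betaDomain (Ω₀ η₀ ε : ℝ) (g : ℝ → ℝ) : Prop :=
  MemLp g 2 (volume.restrict (Set.Ioo (-(etaP Ω₀ η₀ ε)) (etaP Ω₀ η₀ ε))) ∧
  MemLp (deriv g) 2 (volume.restrict (Set.Ioo (-(etaP Ω₀ η₀ ε)) (etaP Ω₀ η₀ ε))) ∧
  (∫ y in Set.Ioo (-(etaP Ω₀ η₀ ε)) (etaP Ω₀ η₀ ε), (1 + ε ^ 2 * y) * (g y) ^ 2) = 1

/-- The ground-state energy `E^gv_β`. -/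
def betaEnergy (s Ω₀ η₀ ε β : ℝ) : ℝ :=
  sInf (betaFunctional s Ω₀ η₀ ε β '' {g | betaDomain Ω₀ η₀ ε g})

/-- `g` is a minimizer of `E^gv_β` over `D^gv_β`. -/
def betaIsMinimizer (s Ω₀ η₀ ε β : ℝ) (g : ℝ → ℝ) : Prop :=
  betaDomain Ω₀ η₀ ε g ∧ betaFunctional s Ω₀ η₀ ε β g = betaEnergy s Ω₀ η₀ ε β

/-- The chemical potential `μ_β = E^gv_β + (1/(2π)) ∫ (1+ε²y) g_β⁴`. -/
def betaChemPot (s Ω₀ η₀ ε β : ℝ) (g : ℝ → ℝ) : ℝ :=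
  betaEnergy s Ω₀ η₀ ε β
    + 1 / (2 * π) * ∫ y in Set.Ioo (-(etaP Ω₀ η₀ ε)) (etaP Ω₀ η₀ ε),
        (1 + ε ^ 2 * y) * (g y) ^ 4

/-!
Completing the square in `U_β` and expanding `W` to second order at `1` gives
`(1 + ε²y)² (U_β + ε²y³v) = ½ (Ω₀(2 + ε²y)y − ε²β)² + Ω₀² y² H(ε²y)` with `H(t) → (s − 2)/2 > 0`
as `t → 0`. Since `ε²η → 0`, for small `ε` the total potential is nonnegative and `O(1 + y²)` on
`(−η, η)`, uniformly in `|β| ≤ B ε⁻²`. Hence the energy density is nonnegative, so `E ≥ 0` and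
the quartic term of a minimizer is at most `E`, i.e. `E ≤ μ ≤ 2E`. The upper bound on `E` comes
from a fixed smooth bump supported in `[−1, 1] ⊂ (−η, η)`, normalized in the weighted `L²`.
-/

open Filter Topology

theorem integral_le_integral_add_of_nonneg {α : Type*} [MeasurableSpace α] {μ : Measure α}
    {f g : α → ℝ} (hf : 0 ≤ᵐ[μ] f) (hg : 0 ≤ᵐ[μ] g) (hfi : Integrable f μ) :
    ∫ x, g x ∂μ ≤ ∫ x, f x + g x ∂μ := by
  by_cases hgi : Integrable g μ
  · rw [integral_add hfi hgi]
    linarith [integral_nonneg_of_ae hf]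
  · rw [integral_undef hgi]
    refine integral_nonneg_of_ae ?_
    filter_upwards [hf, hg] with x hfx hgx
    exact add_nonneg hfx hgx

theorem integrable_mul_half_sq_add_mul_sq {α : Type*} [MeasurableSpace α] {μ : Measure α}
    {w Φ g g' : α → ℝ} {a b : ℝ} (hg : MemLp g 2 μ) (hg' : MemLp g' 2 μ)
    (hw : AEStronglyMeasurable w μ) (hwb : ∀ᵐ x ∂μ, ‖w x‖ ≤ a)
    (hΦ : AEStronglyMeasurable Φ μ) (hΦb : ∀ᵐ x ∂μ, ‖Φ x‖ ≤ b) :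
    Integrable (fun x => w x * (1 / 2 * g' x ^ 2 + Φ x * g x ^ 2)) μ :=
  ((hg'.integrable_sq.const_mul _).add (hg.integrable_sq.bdd_mul hΦ hΦb)).bdd_mul hw hwb

lemma setIntegral_indicator_Icc_const {S : Set ℝ} {a b : ℝ} (hab : a ≤ b) (hS : Icc a b ⊆ S)
    (c : ℝ) : ∫ y in S, (Icc a b).indicator (fun _ => c) y = (b - a) * c := by
  rw [integral_indicator_const c measurableSet_Icc, measureReal_restrict_apply measurableSet_Icc,
    inter_eq_self_of_subset_left hS, Real.volume_real_Icc, max_eq_left (by linarith), smul_eq_mul]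

lemma ContDiffBump.exists_abs_deriv_le {c : ℝ} (f : ContDiffBump c) : ∃ L, ∀ y, |deriv f y| ≤ L :=
  f.hasCompactSupport.deriv.exists_bound_of_continuous (f.contDiff.continuous_deriv le_rfl)

lemma ContDiffBump.eq_zero_and_deriv_eq_zero {f : ContDiffBump (0 : ℝ)} {y : ℝ}
    (hy : f.rOut < |y|) : f y = 0 ∧ deriv f y = 0 := by
  have hy' : y ∉ Metric.closedBall 0 f.rOut := by
    rw [Metric.mem_closedBall, Real.dist_0_eq_abs]
    exact hy.not_ge
  refine ⟨image_eq_zero_of_notMem_tsupport (f.tsupport_eq ▸ hy'), ?_⟩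
  by_contra hne
  exact hy' (f.tsupport_eq ▸ support_deriv_subset hne)

lemma hasDerivAt_Wpot {s x : ℝ} (hs : s ≠ 0) (hx : 0 < x) :
    HasDerivAt (Wpot s) (x ^ (s - 1) - x) x := by
  have h := (((Real.hasDerivAt_rpow_const (p := s) (Or.inl hx.ne')).sub_const 1).const_mul
    (1 / s)).sub (((hasDerivAt_pow 2 x).sub_const 1).const_mul (1 / 2))
  exact h.congr_deriv (by field_simp; ring)

/-- `W(1) = W'(1) = 0` and `W''(1) = s - 2`. -/
lemma isLittleO_Wpot_one_add {s : ℝ} (hs : s ≠ 0) :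
    (fun t => Wpot s (1 + t) - (s - 2) / 2 * t ^ 2) =o[𝓝 0] fun t => t ^ 2 := by
  have hderiv : ∀ t ∈ Ioi (-1 : ℝ),
      HasDerivWithinAt (fun t => Wpot s (1 + t) - (s - 2) / 2 * t ^ 2)
        ((1 + t) ^ (s - 1) - (1 + t) - (s - 2) * t) (Ioi (-1)) t := by
    intro t ht
    have h := ((hasDerivAt_Wpot hs (by linarith [mem_Ioi.mp ht] : 0 < 1 + t)).comp t
      ((hasDerivAt_id t).const_add 1)).sub ((hasDerivAt_pow 2 t).const_mul ((s - 2) / 2))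
    exact (h.congr_deriv (by simp; ring)).hasDerivWithinAt
  have hsecond : HasDerivAt (fun t : ℝ => (1 + t) ^ (s - 1) - (1 + t) - (s - 2) * t) 0 0 := by
    have h := ((((hasDerivAt_id (0 : ℝ)).const_add 1).rpow_const (p := s - 1) (by simp)).sub
      ((hasDerivAt_id (0 : ℝ)).const_add 1)).sub ((hasDerivAt_id (0 : ℝ)).const_mul (s - 2))
    exact h.congr_deriv (by simp; ring)
  have hfirst : (fun t : ℝ => (1 + t) ^ (s - 1) - (1 + t) - (s - 2) * t) =o[𝓝[Ioi (-1)] 0]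
      fun t => (t - 0) ^ 1 := by
    have := hsecond.isLittleO
    simp only [add_zero, Real.one_rpow, sub_self, mul_zero, sub_zero, smul_zero] at this
    simpa using this.mono nhdsWithin_le_nhds
  have h := Convex.isLittleO_pow_succ_real (convex_Ioi (-1)) (by norm_num) hderiv hfirst
  rw [nhdsWithin_eq_nhds.mpr (Ioi_mem_nhds (by norm_num))] at h
  simpa [Wpot] using h

def potentialCoeff (s t : ℝ) : ℝ :=
  (s + 2 - (2 + t) ^ 2) / 2 + t * (s + (s - 1) * t)
    + (1 + t) ^ 2 * ((Wpot s (1 + t) - (s - 2) / 2 * t ^ 2) / t ^ 2)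

def betaPotential (s Ω₀ ε β y : ℝ) : ℝ := Ubeta s Ω₀ ε β y + ε ^ 2 * y ^ 3 * vP s Ω₀ ε y

/-- The cubic Taylor term of `W` inside `phiP` cancels the constant term of `vP`. -/
lemma sq_mul_betaPotential {s Ω₀ ε β y : ℝ} (hs : -2 ≤ s) (hε : ε ≠ 0)
    (hw : 1 + ε ^ 2 * y ≠ 0) :
    (1 + ε ^ 2 * y) ^ 2 * betaPotential s Ω₀ ε β y
      = (Ω₀ * (2 + ε ^ 2 * y) * y - ε ^ 2 * β) ^ 2 / 2
        + Ω₀ ^ 2 * y ^ 2 * potentialCoeff s (ε ^ 2 * y) := by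
  have hα : alphaP s Ω₀ ^ 2 = Ω₀ ^ 2 * (s + 2) := by
    rw [alphaP, mul_pow, Real.sq_sqrt (by linarith)]
  rcases eq_or_ne y 0 with rfl | hy
  · simp [betaPotential, Ubeta]
    ring
  · simp only [betaPotential, Ubeta, vP, phiP, potentialCoeff, hα]
    field_simp
    ring

lemma tendsto_potentialCoeff {s : ℝ} (hs : s ≠ 0) :
    Tendsto (potentialCoeff s) (𝓝 0) (𝓝 ((s - 2) / 2)) := by
  have hpoly : Tendsto (fun t : ℝ => (s + 2 - (2 + t) ^ 2) / 2 + t * (s + (s - 1) * t)) (𝓝 0)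
      (𝓝 ((s - 2) / 2)) := by
    convert (by fun_prop : Continuous fun t : ℝ =>
      (s + 2 - (2 + t) ^ 2) / 2 + t * (s + (s - 1) * t)).tendsto 0 using 2
    ring
  have hweight : Tendsto (fun t : ℝ => (1 + t) ^ 2) (𝓝 0) (𝓝 1) := by
    simpa using (by fun_prop : Continuous fun t : ℝ => (1 + t) ^ 2).tendsto 0
  rw [show (s - 2) / 2 = (s - 2) / 2 + 1 * 0 by ring]
  exact hpoly.add (hweight.mul (isLittleO_Wpot_one_add hs).tendsto_div_nhds_zero)

lemma eventually_potentialCoeff_mem {s : ℝ} (hs : 2 < s) :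
    ∀ᶠ t in 𝓝 (0 : ℝ), 1 + t ∈ Icc (1 / 2 : ℝ) (3 / 2) ∧ potentialCoeff s t ∈ Icc 0 s := by
  have hshift : ∀ᶠ t in 𝓝 (0 : ℝ), t ∈ Ioo (-1 / 2 : ℝ) (1 / 2) :=
    Ioo_mem_nhds (by norm_num) (by norm_num)
  have hcoeff := (tendsto_potentialCoeff (by linarith)).eventually (Ioo_mem_nhds
    (by linarith : (0 : ℝ) < (s - 2) / 2) (by linarith : (s - 2) / 2 < s))
  filter_upwards [hshift, hcoeff] with t ht hH
  exact ⟨⟨by linarith [ht.1], by linarith [ht.2]⟩, hH.1.le, hH.2.le⟩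

lemma betaPotential_mem_Icc {s Ω₀ ε β B y : ℝ} (hs : -2 ≤ s) (hε : ε ≠ 0)
    (hβ : ε ^ 2 * |β| ≤ B) (hw : 1 + ε ^ 2 * y ∈ Icc (1 / 2 : ℝ) (3 / 2))
    (hH : potentialCoeff s (ε ^ 2 * y) ∈ Icc 0 s) :
    betaPotential s Ω₀ ε β y ∈ Icc 0 (4 * ((s + 7) * Ω₀ ^ 2 + B ^ 2) * (1 + y ^ 2)) := by
  have hid := sq_mul_betaPotential (Ω₀ := Ω₀) (β := β) (y := y) hs hε (by linarith [hw.1])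
  have hb : (ε ^ 2 * β) ^ 2 ≤ B ^ 2 := by
    rw [← sq_abs, abs_mul, abs_of_nonneg (by positivity)]
    exact pow_le_pow_left₀ (by positivity) hβ 2
  have hH' := mul_le_mul_of_nonneg_left hH.2 (by positivity : 0 ≤ Ω₀ ^ 2 * y ^ 2)
  have hsq : (Ω₀ * (2 + ε ^ 2 * y) * y - ε ^ 2 * β) ^ 2 ≤
      2 * (Ω₀ * y) ^ 2 * (2 + ε ^ 2 * y) ^ 2 + 2 * (ε ^ 2 * β) ^ 2 := by
    nlinarith [sq_nonneg (Ω₀ * (2 + ε ^ 2 * y) * y + ε ^ 2 * β)]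
  have h2t : (2 + ε ^ 2 * y) ^ 2 ≤ 25 / 4 := by nlinarith [hw.1, hw.2]
  have hrhs : (Ω₀ * (2 + ε ^ 2 * y) * y - ε ^ 2 * β) ^ 2 / 2
        + Ω₀ ^ 2 * y ^ 2 * potentialCoeff s (ε ^ 2 * y)
      ≤ ((s + 7) * Ω₀ ^ 2 + B ^ 2) * (1 + y ^ 2) := by
    nlinarith [mul_le_mul_of_nonneg_left h2t (by positivity : 0 ≤ 2 * (Ω₀ * y) ^ 2),
      sq_nonneg (Ω₀ * y), sq_nonneg B, mul_nonneg (sq_nonneg B) (sq_nonneg y),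
      mul_nonneg (sq_nonneg Ω₀) (by linarith : (0:ℝ) ≤ s + 7)]
  have hw2 : 1 / 4 ≤ (1 + ε ^ 2 * y) ^ 2 := by nlinarith [hw.1]
  have hnonneg : 0 ≤ betaPotential s Ω₀ ε β y :=
    (mul_nonneg_iff_of_pos_left (by linarith : (0 : ℝ) < (1 + ε ^ 2 * y) ^ 2)).mp
      (by rw [hid]; have := hH.1; positivity)
  exact ⟨hnonneg, by nlinarith [mul_le_mul_of_nonneg_right hw2 hnonneg]⟩

lemma measurable_betaPotential (s Ω₀ ε β : ℝ) : Measurable (betaPotential s Ω₀ ε β) := by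
  unfold betaPotential Ubeta vP phiP Wpot
  fun_prop

lemma tendsto_etaP_atTop {Ω₀ η₀ : ℝ} (hΩ : 0 < Ω₀) (hη : 0 < η₀) :
    Tendsto (etaP Ω₀ η₀) (𝓝[>] 0) atTop :=
  (tendsto_abs_atBot_atTop.comp tendsto_log_nhdsGT_zero).const_mul_atTop (by positivity)

lemma tendsto_sq_mul_etaP (Ω₀ η₀ : ℝ) :
    Tendsto (fun ε => ε ^ 2 * etaP Ω₀ η₀ ε) (𝓝[>] 0) (𝓝 0) := by
  have h := ((tendsto_log_mul_rpow_nhdsGT_zero two_pos).abs).const_mul (η₀ / (2 * √Ω₀))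
  rw [abs_zero, mul_zero] at h
  refine h.congr' (eventually_mem_nhdsWithin.mono fun ε (hε : 0 < ε) => ?_)
  rw [abs_mul, abs_of_pos (by positivity : 0 < ε ^ (2 : ℝ)), Real.rpow_two]
  simp only [etaP]
  ring

def BetaCoeffBounded (s Ω₀ η₀ ε β P : ℝ) : Prop :=
  ∀ y ∈ Ioo (-(etaP Ω₀ η₀ ε)) (etaP Ω₀ η₀ ε),
    1 + ε ^ 2 * y ∈ Icc (1 / 2 : ℝ) (3 / 2) ∧ betaPotential s Ω₀ ε β y ∈ Icc 0 P

lemma eventually_betaCoeffBounded {s Ω₀ η₀ : ℝ} (hs : 2 < s) (hΩ : 0 < Ω₀) (hη : 0 < η₀)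
    (B : ℝ) :
    ∀ᶠ ε in 𝓝[>] 0, 1 < etaP Ω₀ η₀ ε ∧ ∀ β, ε ^ 2 * |β| ≤ B →
      BetaCoeffBounded s Ω₀ η₀ ε β
          (4 * ((s + 7) * Ω₀ ^ 2 + B ^ 2) * (1 + etaP Ω₀ η₀ ε ^ 2)) ∧
        ∀ y ∈ Icc (-1 : ℝ) 1, betaPotential s Ω₀ ε β y ≤ 8 * ((s + 7) * Ω₀ ^ 2 + B ^ 2) := by
  obtain ⟨δ, hδ, hsmall⟩ := Metric.eventually_nhds_iff.mp (eventually_potentialCoeff_mem hs)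
  filter_upwards [(tendsto_etaP_atTop hΩ hη).eventually_gt_atTop 1,
    (tendsto_sq_mul_etaP Ω₀ η₀).eventually (gt_mem_nhds hδ), self_mem_nhdsWithin]
    with ε hη1 hεη (hε : 0 < ε)
  refine ⟨hη1, fun β hβ => ?_⟩
  have hbounds : ∀ y, |y| ≤ etaP Ω₀ η₀ ε → 1 + ε ^ 2 * y ∈ Icc (1 / 2 : ℝ) (3 / 2) ∧
      betaPotential s Ω₀ ε β y ∈ Icc 0 (4 * ((s + 7) * Ω₀ ^ 2 + B ^ 2) * (1 + y ^ 2)) := by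
    intro y hy
    have ht : dist (ε ^ 2 * y) 0 < δ := by
      rw [Real.dist_0_eq_abs, abs_mul, abs_of_pos (by positivity)]
      exact (mul_le_mul_of_nonneg_left hy (by positivity)).trans_lt hεη
    obtain ⟨hw, hH⟩ := hsmall ht
    exact ⟨hw, betaPotential_mem_Icc (by linarith) hε.ne' hβ hw hH⟩
  refine ⟨fun y hy => ?_, fun y hy => ?_⟩
  · obtain ⟨hw, h0, hle⟩ := hbounds y (abs_lt.mpr hy).le
    have hy2 : y ^ 2 ≤ etaP Ω₀ η₀ ε ^ 2 := sq_le_sq' (by linarith [hy.1]) hy.2.le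
    exact ⟨hw, h0, hle.trans (by gcongr)⟩
  · obtain ⟨-, -, hle⟩ := hbounds y ((abs_le.mpr hy).trans hη1.le)
    have hy2 : y ^ 2 ≤ 1 := by nlinarith [hy.1, hy.2]
    have hK : 0 ≤ (s + 7) * Ω₀ ^ 2 + B ^ 2 := by nlinarith [sq_nonneg Ω₀, sq_nonneg B]
    nlinarith

def betaDensity (s Ω₀ ε β : ℝ) (g : ℝ → ℝ) (y : ℝ) : ℝ :=
  (1 + ε ^ 2 * y) * (1 / 2 * deriv g y ^ 2 + betaPotential s Ω₀ ε β y * g y ^ 2)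
    + 1 / (2 * π) * ((1 + ε ^ 2 * y) * g y ^ 4)

section Functional

variable {s Ω₀ η₀ ε β P : ℝ}

lemma betaFunctional_eq_integral_betaDensity (g : ℝ → ℝ) :
    betaFunctional s Ω₀ η₀ ε β g =
      ∫ y in Ioo (-(etaP Ω₀ η₀ ε)) (etaP Ω₀ η₀ ε), betaDensity s Ω₀ ε β g y := by
  unfold betaFunctional betaDensity betaPotential
  congr 1
  funext y
  ring

lemma BetaCoeffBounded.quadratic_nonneg (h : BetaCoeffBounded s Ω₀ η₀ ε β P) (g : ℝ → ℝ)
    {y : ℝ} (hy : y ∈ Ioo (-(etaP Ω₀ η₀ ε)) (etaP Ω₀ η₀ ε)) :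
    0 ≤ (1 + ε ^ 2 * y) * (1 / 2 * deriv g y ^ 2 + betaPotential s Ω₀ ε β y * g y ^ 2) := by
  obtain ⟨⟨hw, -⟩, hΦ, -⟩ := h y hy
  exact mul_nonneg (by linarith) (add_nonneg (by positivity) (mul_nonneg hΦ (sq_nonneg _)))

lemma BetaCoeffBounded.quartic_nonneg (h : BetaCoeffBounded s Ω₀ η₀ ε β P) (g : ℝ → ℝ)
    {y : ℝ} (hy : y ∈ Ioo (-(etaP Ω₀ η₀ ε)) (etaP Ω₀ η₀ ε)) :
    0 ≤ 1 / (2 * π) * ((1 + ε ^ 2 * y) * g y ^ 4) := by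
  obtain ⟨⟨hw, -⟩, -⟩ := h y hy
  exact mul_nonneg (by positivity) (mul_nonneg (by linarith) (by positivity))

lemma BetaCoeffBounded.betaDensity_nonneg (h : BetaCoeffBounded s Ω₀ η₀ ε β P) (g : ℝ → ℝ)
    {y : ℝ} (hy : y ∈ Ioo (-(etaP Ω₀ η₀ ε)) (etaP Ω₀ η₀ ε)) : 0 ≤ betaDensity s Ω₀ ε β g y :=
  add_nonneg (h.quadratic_nonneg g hy) (h.quartic_nonneg g hy)

lemma BetaCoeffBounded.betaFunctional_nonneg (h : BetaCoeffBounded s Ω₀ η₀ ε β P)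
    (g : ℝ → ℝ) : 0 ≤ betaFunctional s Ω₀ η₀ ε β g := by
  rw [betaFunctional_eq_integral_betaDensity]
  exact setIntegral_nonneg measurableSet_Ioo fun y hy => h.betaDensity_nonneg g hy

lemma BetaCoeffBounded.betaEnergy_nonneg (h : BetaCoeffBounded s Ω₀ η₀ ε β P) :
    0 ≤ betaEnergy s Ω₀ η₀ ε β :=
  Real.sInf_nonneg (by rintro _ ⟨g, -, rfl⟩; exact h.betaFunctional_nonneg g)

lemma BetaCoeffBounded.betaEnergy_le (h : BetaCoeffBounded s Ω₀ η₀ ε β P) {g : ℝ → ℝ}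
    (hg : betaDomain Ω₀ η₀ ε g) : betaEnergy s Ω₀ η₀ ε β ≤ betaFunctional s Ω₀ η₀ ε β g :=
  csInf_le ⟨0, by rintro _ ⟨g, -, rfl⟩; exact h.betaFunctional_nonneg g⟩ ⟨g, hg, rfl⟩

/-- The quadratic part is integrable for `g ∈ H¹` since the coefficients are bounded; a
non-integrable quartic part has integral `0`. -/
lemma BetaCoeffBounded.quartic_le_betaFunctional (h : BetaCoeffBounded s Ω₀ η₀ ε β P)
    {g : ℝ → ℝ} (hg : betaDomain Ω₀ η₀ ε g) :
    1 / (2 * π) * ∫ y in Ioo (-(etaP Ω₀ η₀ ε)) (etaP Ω₀ η₀ ε), (1 + ε ^ 2 * y) * g y ^ 4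
      ≤ betaFunctional s Ω₀ η₀ ε β g := by
  rw [betaFunctional_eq_integral_betaDensity, ← integral_const_mul]
  unfold betaDensity
  have hw : ∀ᵐ y ∂volume.restrict (Ioo (-(etaP Ω₀ η₀ ε)) (etaP Ω₀ η₀ ε)),
      ‖1 + ε ^ 2 * y‖ ≤ 3 / 2 := by
    filter_upwards [ae_restrict_mem measurableSet_Ioo] with y hy
    obtain ⟨⟨hw, hw'⟩, -⟩ := h y hy
    rwa [Real.norm_eq_abs, abs_of_nonneg (by linarith)]
  have hΦ : ∀ᵐ y ∂volume.restrict (Ioo (-(etaP Ω₀ η₀ ε)) (etaP Ω₀ η₀ ε)),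
      ‖betaPotential s Ω₀ ε β y‖ ≤ P := by
    filter_upwards [ae_restrict_mem measurableSet_Ioo] with y hy
    obtain ⟨-, hΦ, hΦ'⟩ := h y hy
    rwa [Real.norm_eq_abs, abs_of_nonneg hΦ]
  refine integral_le_integral_add_of_nonneg ?_ ?_
    (integrable_mul_half_sq_add_mul_sq hg.1 hg.2.1 (by fun_prop) hw
      (measurable_betaPotential s Ω₀ ε β).aestronglyMeasurable hΦ)
  · filter_upwards [ae_restrict_mem measurableSet_Ioo] with y hy using h.quadratic_nonneg g hy
  · filter_upwards [ae_restrict_mem measurableSet_Ioo] with y hy using h.quartic_nonneg g hy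

lemma BetaCoeffBounded.betaChemPot_mem_Icc (h : BetaCoeffBounded s Ω₀ η₀ ε β P) {g : ℝ → ℝ}
    (hg : betaIsMinimizer s Ω₀ η₀ ε β g) :
    betaChemPot s Ω₀ η₀ ε β g ∈ Icc (betaEnergy s Ω₀ η₀ ε β) (2 * betaEnergy s Ω₀ η₀ ε β) := by
  have hquartic := h.quartic_le_betaFunctional hg.1
  have hquartic_nonneg : 0 ≤ 1 / (2 * π) *
      ∫ y in Ioo (-(etaP Ω₀ η₀ ε)) (etaP Ω₀ η₀ ε), (1 + ε ^ 2 * y) * g y ^ 4 := by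
    rw [← integral_const_mul]
    exact setIntegral_nonneg measurableSet_Ioo fun y hy => h.quartic_nonneg g hy
  rw [hg.2] at hquartic
  unfold betaChemPot
  constructor <;> linarith

end Functional

def trialBump : ContDiffBump (0 : ℝ) := ⟨1 / 2, 1, by norm_num, by norm_num⟩

def trialMass (Ω₀ η₀ ε : ℝ) : ℝ :=
  ∫ y in Ioo (-(etaP Ω₀ η₀ ε)) (etaP Ω₀ η₀ ε), (1 + ε ^ 2 * y) * trialBump y ^ 2

def betaTrial (Ω₀ η₀ ε : ℝ) (y : ℝ) : ℝ := trialBump y / √(trialMass Ω₀ η₀ ε)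

section Trial

variable {s Ω₀ η₀ ε β P : ℝ}

lemma BetaCoeffBounded.one_half_le_trialMass (h : BetaCoeffBounded s Ω₀ η₀ ε β P)
    (hη : 1 < etaP Ω₀ η₀ ε) : 1 / 2 ≤ trialMass Ω₀ η₀ ε := by
  have hle : ∀ y ∈ Ioo (-(etaP Ω₀ η₀ ε)) (etaP Ω₀ η₀ ε),
      (Icc (-(1 / 2)) (1 / 2)).indicator (fun _ => (1 / 2 : ℝ)) y
        ≤ (1 + ε ^ 2 * y) * trialBump y ^ 2 := by
    intro y hy
    obtain ⟨⟨hw, -⟩, -⟩ := h y hy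
    by_cases hy' : y ∈ Icc (-(1 / 2)) (1 / 2)
    · rw [indicator_of_mem hy', trialBump.one_of_mem_closedBall (by
        rwa [Real.closedBall_zero_eq_Icc])]
      linarith
    · rw [indicator_of_notMem hy']
      exact mul_nonneg (by linarith) (sq_nonneg _)
  have hcont : Continuous fun y => (1 + ε ^ 2 * y) * trialBump y ^ 2 := by
    have := trialBump.continuous
    fun_prop
  calc (1 / 2 : ℝ)
      = ∫ y in Ioo (-(etaP Ω₀ η₀ ε)) (etaP Ω₀ η₀ ε),
          (Icc (-(1 / 2)) (1 / 2)).indicator (fun _ => (1 / 2 : ℝ)) y := by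
        rw [setIntegral_indicator_Icc_const (by norm_num)
          (Icc_subset_Ioo (by linarith) (by linarith))]
        norm_num
    _ ≤ trialMass Ω₀ η₀ ε :=
        setIntegral_mono_on ((integrable_const _).indicator measurableSet_Icc)
          (hcont.integrableOn_Icc.mono_set Ioo_subset_Icc_self) measurableSet_Ioo hle

lemma sq_betaTrial (hM : 0 ≤ trialMass Ω₀ η₀ ε) (y : ℝ) :
    betaTrial Ω₀ η₀ ε y ^ 2 = trialBump y ^ 2 / trialMass Ω₀ η₀ ε := by
  rw [betaTrial, div_pow, Real.sq_sqrt hM]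

lemma deriv_betaTrial :
    deriv (betaTrial Ω₀ η₀ ε) = fun y => deriv trialBump y / √(trialMass Ω₀ η₀ ε) :=
  funext fun _ => deriv_div_const _

lemma sq_deriv_betaTrial (hM : 0 ≤ trialMass Ω₀ η₀ ε) (y : ℝ) :
    deriv (betaTrial Ω₀ η₀ ε) y ^ 2 = deriv trialBump y ^ 2 / trialMass Ω₀ η₀ ε := by
  rw [deriv_betaTrial, div_pow, Real.sq_sqrt hM]

lemma BetaCoeffBounded.betaDomain_betaTrial (h : BetaCoeffBounded s Ω₀ η₀ ε β P)
    (hη : 1 < etaP Ω₀ η₀ ε) : betaDomain Ω₀ η₀ ε (betaTrial Ω₀ η₀ ε) := by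
  have hM := h.one_half_le_trialMass hη
  have hsupp : HasCompactSupport (betaTrial Ω₀ η₀ ε) :=
    trialBump.hasCompactSupport.comp_left (g := fun x => x / √(trialMass Ω₀ η₀ ε)) (zero_div _)
  refine ⟨((trialBump.continuous.div_const _).memLp_of_hasCompactSupport hsupp).restrict _,
    ?_, ?_⟩
  · refine (Continuous.memLp_of_hasCompactSupport ?_ hsupp.deriv).restrict _
    rw [deriv_betaTrial]
    exact (trialBump.contDiff.continuous_deriv le_rfl).div_const _
  · simp_rw [sq_betaTrial (by linarith : 0 ≤ trialMass Ω₀ η₀ ε), mul_div_assoc']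
    rw [integral_div]
    exact div_self (show trialMass Ω₀ η₀ ε ≠ 0 by linarith)

lemma BetaCoeffBounded.betaDensity_betaTrial_le (h : BetaCoeffBounded s Ω₀ η₀ ε β P)
    (hη : 1 < etaP Ω₀ η₀ ε) {Q L : ℝ} (hQ : ∀ y ∈ Icc (-1 : ℝ) 1, betaPotential s Ω₀ ε β y ≤ Q)
    (hL : ∀ y, |deriv trialBump y| ≤ L) {y : ℝ}
    (hy : y ∈ Ioo (-(etaP Ω₀ η₀ ε)) (etaP Ω₀ η₀ ε)) :
    betaDensity s Ω₀ ε β (betaTrial Ω₀ η₀ ε) y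
      ≤ (Icc (-1) 1).indicator (fun _ => 3 / 2 * (L ^ 2 + 2 * Q + 1)) y := by
  have hM0 : 0 ≤ trialMass Ω₀ η₀ ε := by linarith [h.one_half_le_trialMass hη]
  obtain ⟨⟨hw₀, hw⟩, hΦ, -⟩ := h y hy
  rw [betaDensity, sq_deriv_betaTrial hM0,
    show betaTrial Ω₀ η₀ ε y ^ 4 = (betaTrial Ω₀ η₀ ε y ^ 2) ^ 2 by ring, sq_betaTrial hM0]
  by_cases hy1 : y ∈ Icc (-1) 1
  · rw [indicator_of_mem hy1]
    have hinv : (trialMass Ω₀ η₀ ε)⁻¹ ≤ 2 := by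
      rw [inv_le_comm₀ (by linarith [h.one_half_le_trialMass hη]) two_pos]
      linarith [h.one_half_le_trialMass hη]
    have hu : trialBump y ^ 2 / trialMass Ω₀ η₀ ε ≤ 1 * 2 := by
      rw [div_eq_mul_inv]
      exact mul_le_mul (pow_le_one₀ trialBump.nonneg trialBump.le_one) hinv
        (inv_nonneg.mpr hM0) zero_le_one
    have hv : deriv trialBump y ^ 2 / trialMass Ω₀ η₀ ε ≤ L ^ 2 * 2 := by
      rw [div_eq_mul_inv]
      exact mul_le_mul (sq_le_sq' (abs_le.mp (hL y)).1 (abs_le.mp (hL y)).2) hinv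
        (inv_nonneg.mpr hM0) (sq_nonneg _)
    have hu0 : 0 ≤ trialBump y ^ 2 / trialMass Ω₀ η₀ ε := by positivity
    have hΦu := mul_le_mul (hQ y hy1) hu hu0 (hΦ.trans (hQ y hy1))
    have hkin : 0 ≤ 1 / 2 * (deriv trialBump y ^ 2 / trialMass Ω₀ η₀ ε)
        + betaPotential s Ω₀ ε β y * (trialBump y ^ 2 / trialMass Ω₀ η₀ ε) := by positivity
    have hquad : (1 + ε ^ 2 * y) * (trialBump y ^ 2 / trialMass Ω₀ η₀ ε) ^ 2
        ≤ 3 / 2 * (1 * 2) ^ 2 :=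
      mul_le_mul hw (pow_le_pow_left₀ hu0 hu 2) (by positivity) (by norm_num)
    have hπ : 1 / (2 * π) ≤ 1 / 6 := by
      gcongr
      linarith [Real.pi_gt_three]
    have h1 := mul_le_mul hw (show _ ≤ L ^ 2 + 2 * Q by linarith) hkin (by norm_num)
    have h2 := mul_le_mul hπ hquad (by positivity) (by norm_num)
    linarith
  · rw [indicator_of_notMem hy1]
    obtain ⟨h0, hd0⟩ := trialBump.eq_zero_and_deriv_eq_zero (y := y) (by
      rw [mem_Icc, ← abs_le, not_le] at hy1
      simpa [trialBump] using hy1)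
    simp [h0, hd0]

lemma BetaCoeffBounded.betaFunctional_betaTrial_le (h : BetaCoeffBounded s Ω₀ η₀ ε β P)
    (hη : 1 < etaP Ω₀ η₀ ε) {Q L : ℝ} (hQ : ∀ y ∈ Icc (-1 : ℝ) 1, betaPotential s Ω₀ ε β y ≤ Q)
    (hL : ∀ y, |deriv trialBump y| ≤ L) :
    betaFunctional s Ω₀ η₀ ε β (betaTrial Ω₀ η₀ ε) ≤ 3 * (L ^ 2 + 2 * Q + 1) :=
  calc betaFunctional s Ω₀ η₀ ε β (betaTrial Ω₀ η₀ ε)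
      ≤ ∫ y in Ioo (-(etaP Ω₀ η₀ ε)) (etaP Ω₀ η₀ ε),
          (Icc (-1) 1).indicator (fun _ => 3 / 2 * (L ^ 2 + 2 * Q + 1)) y := by
        rw [betaFunctional_eq_integral_betaDensity]
        refine integral_mono_of_nonneg ?_ ((integrable_const _).indicator measurableSet_Icc)
          ((ae_restrict_mem measurableSet_Ioo).mono fun y hy =>
            h.betaDensity_betaTrial_le hη hQ hL hy)
        filter_upwards [ae_restrict_mem measurableSet_Ioo] with y hy
        exact h.betaDensity_nonneg _ hy
    _ = 3 * (L ^ 2 + 2 * Q + 1) := by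
        rw [setIntegral_indicator_Icc_const (by norm_num) (Icc_subset_Ioo (by linarith) hη)]
        ring

end Trial


/-- preliminary bounds on `E^gv_β` and `μ_β`: uniformly for `|β| ≤ B ε^{−2}`
and `ε` small, `0 ≤ E^gv_β ≤ C`, `E^gv_β ≤ μ_β ≤ 2 E^gv_β` and hence `μ_β ≤ 2C`. -/
theorem beta_energy_chemPot_preliminary_bounds (s Ω₀ η₀ : ℝ)
    (hs : 2 < s) (hΩ : 0 < Ω₀) (hη : 0 < η₀) :
    ∀ B : ℝ, 0 < B →
      ∃ C : ℝ, 0 < C ∧ ∃ ε₀ : ℝ, 0 < ε₀ ∧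
        ∀ ε : ℝ, 0 < ε → ε < ε₀ → ∀ β : ℝ, |β| ≤ B / ε ^ 2 →
          0 ≤ betaEnergy s Ω₀ η₀ ε β ∧
          betaEnergy s Ω₀ η₀ ε β ≤ C ∧
          ∀ g : ℝ → ℝ, betaIsMinimizer s Ω₀ η₀ ε β g →
            betaEnergy s Ω₀ η₀ ε β ≤ betaChemPot s Ω₀ η₀ ε β g ∧
            betaChemPot s Ω₀ η₀ ε β g ≤ 2 * betaEnergy s Ω₀ η₀ ε β ∧
            betaChemPot s Ω₀ η₀ ε β g ≤ 2 * C := by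
  intro B hB
  obtain ⟨L, hL⟩ := trialBump.exists_abs_deriv_le
  have hK : 0 ≤ (s + 7) * Ω₀ ^ 2 + B ^ 2 := by nlinarith [sq_nonneg Ω₀, sq_nonneg B]
  refine ⟨3 * (L ^ 2 + 2 * (8 * ((s + 7) * Ω₀ ^ 2 + B ^ 2)) + 1), by positivity, ?_⟩
  obtain ⟨ε₀, hε₀, hsmall⟩ :=
    mem_nhdsGT_iff_exists_Ioo_subset.mp (eventually_betaCoeffBounded hs hΩ hη B)
  refine ⟨ε₀, hε₀, fun ε hε hεε₀ β hβ => ?_⟩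
  obtain ⟨hη1, hcoef⟩ := hsmall ⟨hε, hεε₀⟩
  obtain ⟨h, hQ⟩ := hcoef β (by rwa [le_div_iff₀ (by positivity), mul_comm] at hβ)
  have hE := (h.betaEnergy_le (h.betaDomain_betaTrial hη1)).trans
    (h.betaFunctional_betaTrial_le hη1 hQ hL)
  refine ⟨h.betaEnergy_nonneg, hE, fun g hg => ?_⟩
  obtain ⟨hlow, hup⟩ := h.betaChemPot_mem_Icc hg
  exact ⟨hlow, hup, by linarith⟩

end
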